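/- arXiv:1511.03345 — 2 statements merged into one kernel-verified Lean document; each statement's English description precedes it below -/
import Mathlib

section
/- Let U ⊆ ℂ be open, t ∈ ℂ with t ∉ U, and let y_1, …, y_m : U → ℂ be holomorphic. Assume: (i) for every z ∈ U and every 1 ≤ j ≤ m the limit L_j(z) := lim_{n→∞} (|y_j^{(n)}(z)|/n!)^{1/n} exists; (ii) for every z ∈ U, L_1(z) = 1/|z−t| and L_j(z) < 1/|z−t| for all 2 ≤ j ≤ m. Let f_1 = Σ_{j=1}^{m} c_j y_j and f_2 = Σ_{j=1}^{m} d_j y_j with c_1, …, c_m, d_1, …, d_m ∈ ℂ and d_1 ≠ 0. Then for every z ∈ U one has f_2^{(n)}(z) ≠ 0 for all sufficiently large n and lim_{n→∞} f_1^{(n)}(z)/f_2^{(n)}(z) = c_1/d_1; in particular this limit exists and is the same constant for all z ∈ U. -/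
/-! At a point `z ∈ U`, the root test says that `|y₁⁽ⁿ⁾(z)| / n!` grows like `|z - t|⁻ⁿ`,
while every other `|y_j⁽ⁿ⁾(z)| / n!` is eventually below `ρⁿ` for some `ρ < |z - t|⁻¹`.
Hence `y_j⁽ⁿ⁾(z) / y₁⁽ⁿ⁾(z) → 0` for `j ≠ 1`, so `f⁽ⁿ⁾(z) / y₁⁽ⁿ⁾(z)` tends to the coefficient
of `y₁` in `f`, for `f = f₁` and `f = f₂`; dividing the two limits gives `c₁ / d₁`. -/

open Filter Topology

theorem iteratedDeriv_linear_combination {ι : Type*} [Fintype ι] {U : Set ℂ} (hU : IsOpen U)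
    {y : ι → ℂ → ℂ} (hy : ∀ j, DifferentiableOn ℂ (y j) U) (e : ι → ℂ) {z : ℂ} (hz : z ∈ U)
    (n : ℕ) :
    iteratedDeriv n (fun w => ∑ j, e j * y j w) z = ∑ j, e j * iteratedDeriv n (y j) z := by
  have hy' : ∀ j, ContDiffAt ℂ n (y j) z := fun j =>
    ((hy j).contDiffOn hU).contDiffAt (hU.mem_nhds hz)
  rw [iteratedDeriv_fun_sum fun j _ => contDiffAt_const.mul (hy' j)]
  simp only [iteratedDeriv_const_mul_field]

section RootTest

variable {𝕜 : Type*} [NormedField 𝕜] {w : ℕ → ℝ}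

theorem eventually_ne_zero_of_tendsto_root_pos {a : ℕ → 𝕜} {β : ℝ}
    (ha : Tendsto (fun n : ℕ => (‖a n‖ / w n) ^ (1 / (n : ℝ))) atTop (𝓝 β)) (hβ : 0 < β) :
    ∀ᶠ n in atTop, a n ≠ 0 := by
  filter_upwards [ha.eventually_const_lt hβ, eventually_ne_atTop 0] with n hpos hn ha0
  rw [ha0, norm_zero, zero_div, Real.zero_rpow (by positivity)] at hpos
  exact hpos.false

theorem tendsto_div_nhds_zero_of_root_lt (hw : ∀ n, 0 < w n) {a b : ℕ → 𝕜} {α β : ℝ}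
    (ha : Tendsto (fun n : ℕ => (‖a n‖ / w n) ^ (1 / (n : ℝ))) atTop (𝓝 α))
    (hb : Tendsto (fun n : ℕ => (‖b n‖ / w n) ^ (1 / (n : ℝ))) atTop (𝓝 β)) (hαβ : α < β) :
    Tendsto (fun n => a n / b n) atTop (𝓝 0) := by
  have hnonneg : ∀ (x : ℕ → 𝕜) n, 0 ≤ ‖x n‖ / w n := fun x n =>
    div_nonneg (norm_nonneg _) (hw n).le
  have hα : 0 ≤ α := ge_of_tendsto' ha fun n => Real.rpow_nonneg (hnonneg a n) _
  obtain ⟨ρ, hαρ, hρβ⟩ := exists_between hαβ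
  obtain ⟨ρ', hρρ', hρ'β⟩ := exists_between hρβ
  have hρ : 0 < ρ := hα.trans_lt hαρ
  have hρ' : 0 < ρ' := hρ.trans hρρ'
  have hroot_pow : ∀ (x : ℕ → 𝕜) n, n ≠ 0 →
      ((‖x n‖ / w n) ^ (1 / (n : ℝ))) ^ n = ‖x n‖ / w n := fun x n hn => by
    rw [one_div, Real.rpow_inv_natCast_pow (hnonneg x n) hn]
  have hbound : ∀ᶠ n in atTop, ‖a n / b n‖ ≤ (ρ / ρ') ^ n := by
    filter_upwards [ha.eventually_lt_const hαρ, hb.eventually_const_lt hρ'β,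
      eventually_ne_atTop 0] with n han hbn hn
    have hnum : ‖a n‖ / w n ≤ ρ ^ n :=
      hroot_pow a n hn ▸ pow_le_pow_left₀ (Real.rpow_nonneg (hnonneg a n) _) han.le n
    have hden : ρ' ^ n ≤ ‖b n‖ / w n :=
      hroot_pow b n hn ▸ pow_le_pow_left₀ hρ'.le hbn.le n
    calc ‖a n / b n‖ = (‖a n‖ / w n) / (‖b n‖ / w n) := by
          rw [norm_div, div_div_div_cancel_right₀ (hw n).ne']
      _ ≤ ρ ^ n / ρ' ^ n := div_le_div₀ (by positivity) hnum (by positivity) hden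
      _ = (ρ / ρ') ^ n := (div_pow ρ ρ' n).symm
  exact squeeze_zero_norm' hbound (tendsto_pow_atTop_nhds_zero_of_lt_one (by positivity)
    ((div_lt_one hρ').mpr hρρ'))

end RootTest

section Dominant

variable {ι 𝕜 : Type*} [Fintype ι] [NormedField 𝕜] {A : ι → ℕ → 𝕜} {i₀ : ι}

theorem tendsto_sum_mul_div_of_dominant (hA₀ : ∀ᶠ n in atTop, A i₀ n ≠ 0)
    (hdom : ∀ j ≠ i₀, Tendsto (fun n => A j n / A i₀ n) atTop (𝓝 0)) (e : ι → 𝕜) :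
    Tendsto (fun n => (∑ j, e j * A j n) / A i₀ n) atTop (𝓝 (e i₀)) := by
  classical
  have hratio : Tendsto (fun n j => A j n / A i₀ n) atTop (𝓝 (Pi.single i₀ 1)) := by
    refine tendsto_pi_nhds.2 fun j => ?_
    rcases eq_or_ne j i₀ with rfl | hj
    · refine tendsto_const_nhds.congr' ?_
      filter_upwards [hA₀] with n hn
      rw [Pi.single_eq_same, div_self hn]
    · simpa [Pi.single_eq_of_ne hj] using hdom j hj
  have hcomb : Continuous fun x : ι → 𝕜 => ∑ j, e j * x j := by fun_prop
  have hlim := (hcomb.tendsto _).comp hratio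
  simp only [Function.comp_def, Pi.single_apply, mul_ite, mul_one, mul_zero,
    Finset.sum_ite_eq', Finset.mem_univ, if_true] at hlim
  simpa only [Finset.sum_div, mul_div_assoc] using hlim

theorem tendsto_sum_mul_div_sum_mul_of_dominant (hA₀ : ∀ᶠ n in atTop, A i₀ n ≠ 0)
    (hdom : ∀ j ≠ i₀, Tendsto (fun n => A j n / A i₀ n) atTop (𝓝 0)) (c : ι → 𝕜) {d : ι → 𝕜}
    (hd : d i₀ ≠ 0) :
    (∀ᶠ n in atTop, ∑ j, d j * A j n ≠ 0) ∧
      Tendsto (fun n => (∑ j, c j * A j n) / ∑ j, d j * A j n) atTop (𝓝 (c i₀ / d i₀)) := by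
  have hc := tendsto_sum_mul_div_of_dominant hA₀ hdom c
  have hd' := tendsto_sum_mul_div_of_dominant hA₀ hdom d
  refine ⟨(hd'.eventually_ne hd).mono fun n hn h => hn (by rw [h, zero_div]), ?_⟩
  refine (hc.div hd' hd).congr' ?_
  filter_upwards [hA₀] with n hn
  exact div_div_div_cancel_right₀ hn _ _

end Dominant

/-- Let `y 0, …, y (m-1)` be holomorphic on an open set `U` not containing `t`, such that
at every `z ∈ U` the root-test limits `L j z` of the Taylor coefficients exist, with
`L 0 z = 1/|z-t|` and `L j z < 1/|z-t|` for `j ≠ 0` (so `y 0` has radius of convergence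
exactly `|z-t|` while the others have strictly larger radius).  If
`f₁ = Σ c j • y j` and `f₂ = Σ d j • y j` with `d 0 ≠ 0`, then at every `z ∈ U`,
`f₂^{(n)}(z) ≠ 0` for large `n` and `f₁^{(n)}(z)/f₂^{(n)}(z) → c 0 / d 0`,
the same constant for all `z ∈ U`. -/
theorem deriv_ratio_of_solutions_tendsto_const
    (U : Set ℂ) (hU : IsOpen U) (t : ℂ) (ht : t ∉ U)
    (m : ℕ) (hm : 0 < m) (y : Fin m → ℂ → ℂ)
    (hy : ∀ j : Fin m, DifferentiableOn ℂ (y j) U)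
    (L : Fin m → ℂ → ℝ)
    (hL : ∀ z ∈ U, ∀ j : Fin m,
      Tendsto
        (fun n : ℕ =>
          (‖iteratedDeriv n (y j) z‖ / n.factorial) ^ (1 / (n : ℝ)))
        atTop (𝓝 (L j z)))
    (hL1 : ∀ z ∈ U, L ⟨0, hm⟩ z = 1 / ‖z - t‖)
    (hLj : ∀ z ∈ U, ∀ j : Fin m, j ≠ ⟨0, hm⟩ → L j z < 1 / ‖z - t‖)
    (c d : Fin m → ℂ) (hd : d ⟨0, hm⟩ ≠ 0)
    (f₁ f₂ : ℂ → ℂ)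
    (hf₁ : f₁ = fun z => ∑ j : Fin m, c j * y j z)
    (hf₂ : f₂ = fun z => ∑ j : Fin m, d j * y j z) :
    ∀ z ∈ U,
      (∀ᶠ n in atTop, iteratedDeriv n f₂ z ≠ 0) ∧
      Tendsto (fun n : ℕ => iteratedDeriv n f₁ z / iteratedDeriv n f₂ z) atTop
        (𝓝 (c ⟨0, hm⟩ / d ⟨0, hm⟩)) := by
  intro z hz
  have hfact : ∀ n : ℕ, (0 : ℝ) < n.factorial := fun n => mod_cast n.factorial_pos
  have hzt : 0 < 1 / ‖z - t‖ :=
    one_div_pos.2 (norm_pos_iff.2 (sub_ne_zero.2 fun h => ht (h ▸ hz)))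
  have hA₀ : ∀ᶠ n in atTop, iteratedDeriv n (y ⟨0, hm⟩) z ≠ 0 :=
    eventually_ne_zero_of_tendsto_root_pos (hL z hz _) (hL1 z hz ▸ hzt)
  have hdom : ∀ j ≠ ⟨0, hm⟩, Tendsto
      (fun n => iteratedDeriv n (y j) z / iteratedDeriv n (y ⟨0, hm⟩) z) atTop (𝓝 0) :=
    fun j hj => tendsto_div_nhds_zero_of_root_lt hfact (hL z hz j) (hL z hz _)
      (hL1 z hz ▸ hLj z hz j hj)
  simp only [hf₁, hf₂, iteratedDeriv_linear_combination hU hy _ hz]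
  exact tendsto_sum_mul_div_sum_mul_of_dominant hA₀ hdom c hd
end

section
/- Let U ⊆ ℂ be open, t ∈ ℂ with t ∉ U, and q_0, q_1 : U → ℂ holomorphic. Define q_{0,n}, q_{1,n} : U → ℂ for n ≥ 2 by q_{0,2} := q_0, q_{1,2} := q_1, and q_{0,n+1} := q_{0,n}′ + q_{1,n}·q_0, q_{1,n+1} := q_{1,n}′ + q_{0,n} + q_{1,n}·q_1. Let y_1, y_2 : U → ℂ be holomorphic solutions of y″ = q_0 y + q_1 y′ on U and let z ∈ U satisfy: (i) y_1(z) y_2′(z) − y_2(z) y_1′(z) ≠ 0; (ii) y_2(z) ≠ 0; (iii) lim_{n→∞} (|y_1^{(n)}(z)|/n!)^{1/n} = 1/|z−t|; (iv) the limit lim_{n→∞} (|y_2^{(n)}(z)|/n!)^{1/n} exists and is strictly less than 1/|z−t|. Then q_{1,n}(z) ≠ 0 for all sufficiently large n and lim_{n→∞} q_{0,n}(z)/q_{1,n}(z) = −y_2′(z)/y_2(z). -/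
open Filter Topology

/-!
Differentiating the equation gives `y⁽ⁿ⁾ = q_{0,n} y + q_{1,n} y'` for every solution, so
Cramer's rule expresses `q_{0,n}(z)` and `q_{1,n}(z)`, times the Wronskian, through
`y₁⁽ⁿ⁾(z)` and `y₂⁽ⁿ⁾(z)`. The gap between the two root-test limits makes
`y₂⁽ⁿ⁾(z) / y₁⁽ⁿ⁾(z)` decay geometrically, and dividing both Cramer formulas by `y₁⁽ⁿ⁾(z)`
leaves `y₂'(z) / (-y₂(z))` in the limit.
-/
/-- The coefficients `(q_{0,n}, q_{1,n})` (here `q2Seq q0 q1 s = (q_{0,2+s}, q_{1,2+s})`)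
obtained by repeatedly differentiating the equation `y'' = q0 y + q1 y'`. -/
noncomputable def q2Seq (q0 q1 : ℂ → ℂ) : ℕ → (ℂ → ℂ) × (ℂ → ℂ)
  | 0 => (q0, q1)
  | s + 1 =>
      (deriv (q2Seq q0 q1 s).1 + (q2Seq q0 q1 s).2 * q0,
       deriv (q2Seq q0 q1 s).2 + (q2Seq q0 q1 s).1 + (q2Seq q0 q1 s).2 * q1)

section Coefficients

variable {U : Set ℂ} {q0 q1 : ℂ → ℂ}

theorem differentiableOn_q2Seq (hU : IsOpen U) (hq0 : DifferentiableOn ℂ q0 U)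
    (hq1 : DifferentiableOn ℂ q1 U) (s : ℕ) :
    DifferentiableOn ℂ (q2Seq q0 q1 s).1 U ∧ DifferentiableOn ℂ (q2Seq q0 q1 s).2 U := by
  induction s with
  | zero => exact ⟨hq0, hq1⟩
  | succ s ih =>
    exact ⟨(ih.1.deriv hU).add (ih.2.mul hq0), ((ih.2.deriv hU).add ih.1).add (ih.2.mul hq1)⟩

theorem eqOn_iteratedDeriv_add_two_q2Seq (hU : IsOpen U) (hq0 : DifferentiableOn ℂ q0 U)
    (hq1 : DifferentiableOn ℂ q1 U) {y : ℂ → ℂ} (hy : DifferentiableOn ℂ y U)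
    (heq : ∀ w ∈ U, iteratedDeriv 2 y w = q0 w * y w + q1 w * deriv y w) (s : ℕ) :
    U.EqOn (iteratedDeriv (s + 2) y)
      (fun w => (q2Seq q0 q1 s).1 w * y w + (q2Seq q0 q1 s).2 w * deriv y w) := by
  induction s with
  | zero => exact heq
  | succ s ih =>
    intro w hw
    obtain ⟨hA, hB⟩ := differentiableOn_q2Seq hU hq0 hq1 s
    have hdA := hA.differentiableAt (hU.mem_nhds hw)
    have hdB := hB.differentiableAt (hU.mem_nhds hw)
    have hdy := hy.differentiableAt (hU.mem_nhds hw)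
    have hdy' := (hy.deriv hU).differentiableAt (hU.mem_nhds hw)
    have hy'' : deriv (deriv y) w = q0 w * y w + q1 w * deriv y w := by
      rw [← heq w hw, iteratedDeriv_succ, iteratedDeriv_one]
    rw [iteratedDeriv_succ, ih.deriv hU hw, deriv_fun_add (hdA.fun_mul hdy) (hdB.fun_mul hdy'),
      deriv_fun_mul hdA hdy, deriv_fun_mul hdB hdy', hy'']
    simp only [q2Seq, Pi.add_apply, Pi.mul_apply]
    ring

end Coefficients

theorem cramer_two {R : Type*} [CommRing R] {A B u v u' v' du dv : R}
    (hu : du = A * u + B * u') (hv : dv = A * v + B * v') :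
    A * (u * v' - v * u') = du * v' - dv * u' ∧ B * (u * v' - v * u') = dv * u - du * v :=
  ⟨by linear_combination (-v') * hu + u' * hv, by linear_combination v * hu - u * hv⟩

theorem tendsto_pow_self_atTop_nhds_zero {x : ℕ → ℝ} {c : ℝ} (hx : Tendsto x atTop (𝓝 c))
    (hx0 : ∀ᶠ n in atTop, 0 ≤ x n) (hc : c < 1) : Tendsto (fun n => x n ^ n) atTop (𝓝 0) := by
  obtain ⟨ρ, hcρ, hρ1⟩ := exists_between (max_lt hc one_pos)
  have hρ0 : 0 ≤ ρ := (le_max_right c 0).trans hcρ.le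
  refine squeeze_zero' (hx0.mono fun n hn => pow_nonneg hn n) ?_
    (tendsto_pow_atTop_nhds_zero_of_lt_one hρ0 hρ1)
  filter_upwards [hx0, hx.eventually_lt_const ((le_max_left c 0).trans_lt hcρ)] with n hn hnρ
  exact pow_le_pow_left₀ hn hnρ.le n

theorem eventually_pos_and_tendsto_div_of_root_lt {u v : ℕ → ℝ} {L M : ℝ}
    (hu0 : ∀ n, 0 ≤ u n) (hv0 : ∀ n, 0 ≤ v n)
    (hu : Tendsto (fun n : ℕ => u n ^ (1 / (n : ℝ))) atTop (𝓝 L))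
    (hv : Tendsto (fun n : ℕ => v n ^ (1 / (n : ℝ))) atTop (𝓝 M)) (hML : M < L) :
    (∀ᶠ n in atTop, 0 < u n) ∧ Tendsto (fun n => v n / u n) atTop (𝓝 0) := by
  have hM : 0 ≤ M := ge_of_tendsto' hv fun n => Real.rpow_nonneg (hv0 n) _
  have hL : 0 < L := hM.trans_lt hML
  have hroot : ∀ x : ℕ → ℝ, (∀ n, 0 ≤ x n) →
      ∀ᶠ n : ℕ in atTop, (x n ^ (1 / (n : ℝ))) ^ n = x n := fun x hx =>
    (eventually_ne_atTop 0).mono fun n hn => by rw [one_div, Real.rpow_inv_natCast_pow (hx n) hn]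
  have hupos : ∀ᶠ n in atTop, 0 < u n ^ (1 / (n : ℝ)) := hu.eventually_const_lt hL
  refine ⟨(hroot u hu0).and hupos |>.mono fun n ⟨h, hn⟩ => h ▸ pow_pos hn n, ?_⟩
  refine (tendsto_pow_self_atTop_nhds_zero (hv.div hu hL.ne') ?_
    ((div_lt_one hL).2 hML)).congr' ?_
  · exact .of_forall fun n => div_nonneg (Real.rpow_nonneg (hv0 n) _) (Real.rpow_nonneg (hu0 n) _)
  · filter_upwards [hroot u hu0, hroot v hv0] with n hun hvn
    rw [Pi.div_apply, div_pow, hun, hvn]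

theorem tendsto_quotient_of_tendsto_div_zero {f g : ℕ → ℂ} {u v u' v' : ℂ}
    (hf : ∀ᶠ n in atTop, f n ≠ 0) (hgf : Tendsto (fun n => g n / f n) atTop (𝓝 0)) (hv : v ≠ 0) :
    (∀ᶠ n in atTop, g n * u - f n * v ≠ 0) ∧
      Tendsto (fun n => (f n * v' - g n * u') / (g n * u - f n * v)) atTop (𝓝 (-(v' / v))) := by
  have hden : Tendsto (fun n => g n / f n * u - v) atTop (𝓝 (-v)) := by
    simpa using (hgf.mul_const u).sub_const v
  have hnum : Tendsto (fun n => v' - g n / f n * u') atTop (𝓝 v') := by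
    simpa using (hgf.mul_const u').const_sub v'
  have hfactor : ∀ᶠ n in atTop, g n * u - f n * v = f n * (g n / f n * u - v) :=
    hf.mono fun n hn => by field_simp
  constructor
  · filter_upwards [hf, hfactor, hden.eventually_ne (neg_ne_zero.2 hv)] with n hn h h'
    rw [h]
    exact mul_ne_zero hn h'
  · rw [← div_neg]
    refine (hnum.div hden (neg_ne_zero.2 hv)).congr' ?_
    filter_upwards [hf] with n hn
    simp only [Pi.div_apply]
    field_simp

theorem qRatio_tendsto_neg_log_deriv_general
    (U : Set ℂ) (hU : IsOpen U) (t : ℂ)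
    (q0 q1 : ℂ → ℂ)
    (hq0 : DifferentiableOn ℂ q0 U) (hq1 : DifferentiableOn ℂ q1 U)
    (y₁ y₂ : ℂ → ℂ)
    (hy₁ : DifferentiableOn ℂ y₁ U) (hy₂ : DifferentiableOn ℂ y₂ U)
    (heq₁ : ∀ w ∈ U, iteratedDeriv 2 y₁ w = q0 w * y₁ w + q1 w * deriv y₁ w)
    (heq₂ : ∀ w ∈ U, iteratedDeriv 2 y₂ w = q0 w * y₂ w + q1 w * deriv y₂ w)
    (z : ℂ) (hz : z ∈ U)
    (hW : y₁ z * deriv y₂ z - y₂ z * deriv y₁ z ≠ 0)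
    (hy₂z : y₂ z ≠ 0)
    (hrad₁ : Tendsto
      (fun n : ℕ => (‖iteratedDeriv n y₁ z‖ / n.factorial) ^ (1 / (n : ℝ)))
      atTop (𝓝 (1 / ‖z - t‖)))
    (hrad₂ : ∃ B : ℝ,
      Tendsto
        (fun n : ℕ => (‖iteratedDeriv n y₂ z‖ / n.factorial) ^ (1 / (n : ℝ)))
        atTop (𝓝 B) ∧ B < 1 / ‖z - t‖) :
    (∀ᶠ n in atTop, (q2Seq q0 q1 (n - 2)).2 z ≠ 0) ∧
      Tendsto (fun n : ℕ => (q2Seq q0 q1 (n - 2)).1 z / (q2Seq q0 q1 (n - 2)).2 z)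
        atTop (𝓝 (-(deriv y₂ z / y₂ z))) := by
  obtain ⟨B, hrad₂, hB⟩ := hrad₂
  obtain ⟨hpos, hlim⟩ := eventually_pos_and_tendsto_div_of_root_lt
    (fun n => by positivity) (fun n => by positivity) hrad₁ hrad₂ hB
  have hd₁ : ∀ᶠ n in atTop, iteratedDeriv n y₁ z ≠ 0 :=
    hpos.mono fun n hn => norm_pos_iff.1 (pos_of_mul_pos_left hn (by positivity))
  have hd₂₁ : Tendsto (fun n => iteratedDeriv n y₂ z / iteratedDeriv n y₁ z) atTop (𝓝 0) := by
    refine tendsto_zero_iff_norm_tendsto_zero.2 (hlim.congr fun n => ?_)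
    rw [norm_div, div_div_div_cancel_right₀ (by positivity)]
  obtain ⟨hden, hquot⟩ := tendsto_quotient_of_tendsto_div_zero
    (u := y₁ z) (u' := deriv y₁ z) (v' := deriv y₂ z) hd₁ hd₂₁ hy₂z
  have hcramer : ∀ᶠ n in atTop,
      (q2Seq q0 q1 (n - 2)).1 z * (y₁ z * deriv y₂ z - y₂ z * deriv y₁ z) =
          iteratedDeriv n y₁ z * deriv y₂ z - iteratedDeriv n y₂ z * deriv y₁ z ∧
        (q2Seq q0 q1 (n - 2)).2 z * (y₁ z * deriv y₂ z - y₂ z * deriv y₁ z) =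
          iteratedDeriv n y₂ z * y₁ z - iteratedDeriv n y₁ z * y₂ z :=
    (eventually_ge_atTop 2).mono fun n hn => by
      obtain ⟨s, rfl⟩ : ∃ s, n = s + 2 := ⟨n - 2, by omega⟩
      rw [Nat.add_sub_cancel]
      exact cramer_two (eqOn_iteratedDeriv_add_two_q2Seq hU hq0 hq1 hy₁ heq₁ _ hz)
        (eqOn_iteratedDeriv_add_two_q2Seq hU hq0 hq1 hy₂ heq₂ _ hz)
  have hq1n : ∀ᶠ n in atTop, (q2Seq q0 q1 (n - 2)).2 z ≠ 0 := by
    filter_upwards [hcramer, hden] with n hn hn'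
    exact left_ne_zero_of_mul (hn.2 ▸ hn')
  refine ⟨hq1n, hquot.congr' ?_⟩
  filter_upwards [hcramer] with n hn
  rw [← hn.1, ← hn.2, mul_div_mul_right _ _ hW]

/-- For a second order equation `y'' = q0 y + q1 y'` on an open `U`, with `t ∉ U` a
singularity: if at `z ∈ U` the solutions `y₁, y₂` have nonvanishing Wronskian,
`y₂(z) ≠ 0`, the Taylor series of `y₁` at `z` has radius of convergence exactly
`|z - t|` (root-test limit `1/|z-t|`) while the root-test limit of `y₂` exists and is
`< 1/|z-t|`, then `q_{1,n}(z) ≠ 0` for large `n` and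
`q_{0,n}(z)/q_{1,n}(z) → -y₂'(z)/y₂(z)`. -/
theorem qRatio_tendsto_neg_log_deriv
    (U : Set ℂ) (hU : IsOpen U) (t : ℂ) (ht : t ∉ U)
    (q0 q1 : ℂ → ℂ)
    (hq0 : DifferentiableOn ℂ q0 U) (hq1 : DifferentiableOn ℂ q1 U)
    (y₁ y₂ : ℂ → ℂ)
    (hy₁ : DifferentiableOn ℂ y₁ U) (hy₂ : DifferentiableOn ℂ y₂ U)
    (heq₁ : ∀ w ∈ U, iteratedDeriv 2 y₁ w = q0 w * y₁ w + q1 w * deriv y₁ w)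
    (heq₂ : ∀ w ∈ U, iteratedDeriv 2 y₂ w = q0 w * y₂ w + q1 w * deriv y₂ w)
    (z : ℂ) (hz : z ∈ U)
    (hW : y₁ z * deriv y₂ z - y₂ z * deriv y₁ z ≠ 0)
    (hy₂z : y₂ z ≠ 0)
    (hrad₁ : Tendsto
      (fun n : ℕ => (‖iteratedDeriv n y₁ z‖ / n.factorial) ^ (1 / (n : ℝ)))
      atTop (𝓝 (1 / ‖z - t‖)))
    (hrad₂ : ∃ B : ℝ,
      Tendsto
        (fun n : ℕ => (‖iteratedDeriv n y₂ z‖ / n.factorial) ^ (1 / (n : ℝ)))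
        atTop (𝓝 B) ∧ B < 1 / ‖z - t‖) :
    (∀ᶠ n in atTop, (q2Seq q0 q1 (n - 2)).2 z ≠ 0) ∧
      Tendsto (fun n : ℕ => (q2Seq q0 q1 (n - 2)).1 z / (q2Seq q0 q1 (n - 2)).2 z)
        atTop (𝓝 (-(deriv y₂ z / y₂ z))) :=
  qRatio_tendsto_neg_log_deriv_general U hU t q0 q1 hq0 hq1 y₁ y₂ hy₁ hy₂ heq₁ heq₂ z hz hW hy₂z
    hrad₁ hrad₂
end
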